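/- arXiv:2112.13340 — 10 statements merged into one kernel-verified Lean document; each statement's English description precedes it below -/
import Mathlib

section
/- Let s be a natural number and let M : Matrix (Fin s × G) (Fin s × G) R be a block matrix all of whose blocks are Hadamard matrices: for all p, q ∈ Fin s there exists a p q : G → R such that M (p,i) (q,j) = a p q (i + j) for all i, j ∈ G. Define M'' : Matrix (Fin s) (Fin s) R by M'' p q = ∑_{g ∈ G} a p q g (the eigenvalue of the (p,q)-block), and let q(x) be the characteristic polynomial of M''. Then evaluating q at the matrix M gives a square-zero matrix: (Polynomial.aeval M (Matrix.charpoly M''))^2 = 0. -/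
/-!
Regard `M` as the image, under the regular representation of `G`, of an `s × s` matrix `B` over
the group algebra `R[G]`; the matrix of block eigenvalues is then the image of `B` under the
augmentation `ε : R[G] → R`. As `R[G]` has characteristic 2 and `g + g = 0` in `G`, squaring on
`R[G]` is the ring map `u ↦ ε(u)²`, so every element of `ker ε` squares to zero. The characteristic
polynomial of `B` and the lift of `q = χ(ε B)` differ by a polynomial `r` with coefficients in
`ker ε`, so `r² = 0` by Frobenius, while Cayley–Hamilton gives `q(B) = -r(B)`. Hence `q(B)² = 0`,
and applying the regular representation gives `q(M)² = 0`.
-/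

open Polynomial

namespace AddMonoidAlgebra

variable {R G : Type*} [CommRing R]

noncomputable def augmentation [AddMonoid G] : R[G] →ₐ[R] R :=
  lift R R G 1

@[simp]
theorem augmentation_single [AddMonoid G] (g : G) (r : R) : augmentation (single g r) = r := by
  simp [augmentation, lift_single]

theorem pow_expChar_eq_algebraMap_augmentation_pow [AddCommMonoid G] [Nonempty G] (p : ℕ)
    [ExpChar R p] (hG : ∀ g : G, p • g = 0) (u : R[G]) :
    u ^ p = algebraMap R R[G] (augmentation u ^ p) := by
  have : ExpChar R[G] p := ExpChar.of_injective_algebraMap' R p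
  -- Both sides are ring maps in `u`, so it suffices to compare them on the `single g r`.
  change frobenius R[G] p u = ((algebraMap R R[G]).comp ((frobenius R p).comp
    (augmentation : R[G] →ₐ[R] R).toRingHom)) u
  congr 1
  refine ringHom_ext (fun r => ?_) (fun g => ?_)
  · simp [frobenius_def, single_pow]
  · simp [frobenius_def, single_pow, hG]

variable [AddGroup G] [Fintype G] [DecidableEq G]

def translationMatrix : Multiplicative G →* Matrix G G R where
  toFun g := (Equiv.addRight g.toAdd).toPEquiv.toMatrix
  map_one' := by simp
  map_mul' g h := by
    rw [← PEquiv.toMatrix_trans, ← Equiv.toPEquiv_trans]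
    congr
    ext x
    simp [add_assoc]

noncomputable def regularMatrix : R[G] →ₐ[R] Matrix G G R :=
  lift R _ G translationMatrix

theorem regularMatrix_sum_single_apply (f : G → R) (i j : G) :
    regularMatrix (∑ g, single g (f g)) i j = f (-i + j) := by
  simp [regularMatrix, lift_single, translationMatrix, Matrix.sum_apply, PEquiv.toMatrix_apply,
    ← eq_neg_add_iff_add_eq]

end AddMonoidAlgebra

theorem Polynomial.pow_expChar_eq_zero_of_forall_coeff_pow_eq_zero {C : Type*} [CommRing C]
    (p : ℕ) [ExpChar C p] (r : C[X]) (hr : ∀ n, r.coeff n ^ p = 0) : r ^ p = 0 := by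
  have hfrob : r.map (frobenius C p) = 0 := by
    ext n
    simp [frobenius_def, hr]
  rw [← map_frobenius_expand, map_expand, hfrob, map_zero]

theorem Matrix.aeval_charpoly_map_pow_expChar_eq_zero {R C n : Type*} [CommRing R] [CommRing C]
    [Algebra R C] [Fintype n] [DecidableEq n] (p : ℕ) [ExpChar C p] (ε : C →ₐ[R] R)
    (hε : ∀ u, ε u = 0 → u ^ p = 0) (B : Matrix n n C) :
    aeval B (B.map ε).charpoly ^ p = 0 := by
  set r := B.charpoly - (B.map ε).charpoly.map (algebraMap R C)
  have hr : ∀ m, ε (r.coeff m) = 0 := by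
    intro m
    rw [coeff_sub, coeff_map, map_sub, AlgHom.commutes, Algebra.algebraMap_self, RingHom.id_apply,
      sub_eq_zero, ← AlgHom.coe_toRingHom, ← coeff_map, ← charpoly_map]
  have hBr : aeval B (B.map ε).charpoly = -aeval B r := by
    simp [r, aeval_self_charpoly]
  rw [hBr, neg_pow, ← map_pow,
    pow_expChar_eq_zero_of_forall_coeff_pow_eq_zero p r fun m => hε _ (hr m), map_zero, mul_zero]

/-- **Keller–Rosemarin conjecture.** Let `R` be a commutative ring of characteristic 2 and
`G = Fin k → ZMod 2`. If `M` is an `s × s` block matrix over `R` all of whose blocks are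
Hadamard matrices (block `(p,q)` has first row `a p q`), and `M''` is the `s × s` matrix of
block eigenvalues, then evaluating the characteristic polynomial of `M''` at `M` gives a
square-zero matrix. -/
theorem keller_rosemarin_conjecture (k s : ℕ) (R : Type*) [CommRing R] [CharP R 2]
    (M : Matrix (Fin s × (Fin k → ZMod 2)) (Fin s × (Fin k → ZMod 2)) R)
    (a : Fin s → Fin s → (Fin k → ZMod 2) → R)
    (hM : ∀ p q (i j : Fin k → ZMod 2), M (p, i) (q, j) = a p q (i + j)) :
    (Polynomial.aeval M (Matrix.charpoly (Matrix.of fun p q => ∑ g, a p q g))) ^ 2 = 0 := by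
  classical
  let B : Matrix (Fin s) (Fin s) (AddMonoidAlgebra R (Fin k → ZMod 2)) :=
    Matrix.of fun p q => ∑ g, AddMonoidAlgebra.single g (a p q g)
  have hB : B.map AddMonoidAlgebra.augmentation = Matrix.of fun p q => ∑ g, a p q g := by
    ext p q
    simp [B]
  let Φ := (Matrix.compAlgEquiv (Fin s) (Fin k → ZMod 2) R R).toAlgHom.comp
    (AddMonoidAlgebra.regularMatrix (R := R) (G := Fin k → ZMod 2)).mapMatrix
  have hΦ : Φ B = M := by
    ext ⟨p, i⟩ ⟨q, j⟩
    simp [Φ, B, AddMonoidAlgebra.regularMatrix_sum_single_apply, ZModModule.neg_eq_self, hM]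
  have hsq : ∀ u : AddMonoidAlgebra R (Fin k → ZMod 2),
      AddMonoidAlgebra.augmentation u = 0 → u ^ 2 = 0 := by
    intro u hu
    rw [AddMonoidAlgebra.pow_expChar_eq_algebraMap_augmentation_pow 2
      (ZModModule.char_nsmul_eq_zero 2) u, hu]
    simp
  have : ExpChar (AddMonoidAlgebra R (Fin k → ZMod 2)) 2 := ExpChar.of_injective_algebraMap' R 2
  rw [← hΦ, ← hB, aeval_algHom_apply, ← map_pow,
    Matrix.aeval_charpoly_map_pow_expChar_eq_zero 2 _ hsq B, map_zero]
end

section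
/- Let s be a natural number and let M : Matrix (Fin s × G) (Fin s × G) R be a block matrix all of whose blocks are Hadamard matrices with eigenvalue zero: for all p, q ∈ Fin s there exists a p q : G → R such that M (p,i) (q,j) = a p q (i + j) for all i, j ∈ G, and moreover ∑_{g ∈ G} a p q g = 0 for all p, q. Then M^(2s) = 0. -/
/-!
In `G = (ZMod 2)^k` we have `i + j = i - j`, so a block `(a (i + j))_{i,j}` is the matrix of left
multiplication by `x = ∑ g, a g • g` on the group algebra `R[G]` in its standard basis, and `M` is
the image of an `s × s` matrix `N` over `R[G]` under an algebra homomorphism. Squaring is additive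
in characteristic 2 and `g ^ 2 = 1`, so `x ^ 2 = (∑ g, a g) ^ 2 • 1 = 0`: the Frobenius kills every
entry of `N`. It therefore maps `charpoly N` to `charpoly 0 = X ^ s`, so the coefficients of
`q = X ^ s - charpoly N` square to zero and `q ^ 2 = 0`. By Cayley–Hamilton `q(N) = N ^ s`, whence
`N ^ (2 * s) = q(N) ^ 2 = 0`.
-/

open Polynomial in
theorem Matrix.pow_char_mul_card_eq_zero {S n : Type*} [CommRing S] [Fintype n] [DecidableEq n]
    (p : ℕ) [ExpChar S p] (N : Matrix n n S) (hN : ∀ i j, N i j ^ p = 0) :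
    N ^ (p * Fintype.card n) = 0 := by
  set q : S[X] := X ^ Fintype.card n - N.charpoly
  have hq : q.map (frobenius S p) = 0 := by
    have hN0 : N.map (frobenius S p) = 0 := by ext i j; simp [frobenius_def, hN]
    simp [q, Polynomial.map_sub, ← charpoly_map, hN0, charpoly_zero]
  have hNq : aeval N q = N ^ Fintype.card n := by simp [q, aeval_self_charpoly]
  calc N ^ (p * Fintype.card n) = aeval N (q ^ p) := by rw [map_pow, hNq, ← pow_mul, mul_comm]
    _ = 0 := by rw [← map_frobenius_expand, map_expand, hq, map_zero, map_zero]

namespace AddMonoidAlgebra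

instance expChar {R G : Type*} [CommSemiring R] [AddMonoid G] {p : ℕ} [ExpChar R p] :
    ExpChar (AddMonoidAlgebra R G) p :=
  expChar_of_injective_algebraMap (FaithfulSMul.algebraMap_injective R _) p

theorem sum_single_pow_char {R G : Type*} [CommSemiring R] [AddCommMonoid G]
    (p : ℕ) [ExpChar R p] (hG : ∀ g : G, p • g = 0) (s : Finset G) (f : G → R) :
    (∑ g ∈ s, single g (f g)) ^ p = single 0 ((∑ g ∈ s, f g) ^ p) := by
  simp only [sum_pow_char, single_pow, hG]
  exact (map_sum (singleAddHom 0) _ _).symm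

variable (n R G : Type*) [Fintype n] [DecidableEq n] [CommSemiring R] [AddGroup G] [Fintype G]
  [DecidableEq G]

noncomputable def blockLeftMulMatrix :
    Matrix n n (AddMonoidAlgebra R G) →ₐ[R] Matrix (n × G) (n × G) R :=
  (Matrix.compAlgEquiv n G R R).toAlgHom.comp (Algebra.leftMulMatrix (basis G R)).mapMatrix

variable {n R G}

theorem blockLeftMulMatrix_apply (N : Matrix n n (AddMonoidAlgebra R G)) (p q : n) (i j : G) :
    blockLeftMulMatrix n R G N (p, i) (q, j) = (N p q).coeff (i - j) := by
  rw [sub_eq_add_neg, ← mul_one ((N p q).coeff _), ← coeff_mul_single_apply]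
  exact Algebra.leftMulMatrix_eq_repr_mul _ _ _ _

end AddMonoidAlgebra

open AddMonoidAlgebra in
/-- If `M` is an `s × s` block matrix over a commutative ring `R` of characteristic 2, all of
whose blocks are Hadamard matrices with eigenvalue zero, then `M ^ (2 * s) = 0`. -/
theorem block_hadamard_eigenvalue_zero_pow (k s : ℕ) (R : Type*) [CommRing R] [CharP R 2]
    (M : Matrix (Fin s × (Fin k → ZMod 2)) (Fin s × (Fin k → ZMod 2)) R)
    (a : Fin s → Fin s → (Fin k → ZMod 2) → R)
    (hM : ∀ p q (i j : Fin k → ZMod 2), M (p, i) (q, j) = a p q (i + j))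
    (ha : ∀ p q, ∑ g, a p q g = 0) :
    M ^ (2 * s) = 0 := by
  set N : Matrix (Fin s) (Fin s) (AddMonoidAlgebra R (Fin k → ZMod 2)) :=
    Matrix.of fun p q => ∑ g, single g (a p q g)
  have hMN : M = blockLeftMulMatrix _ _ _ N := by
    ext ⟨p, i⟩ ⟨q, j⟩
    simp [blockLeftMulMatrix_apply, hM, N, ZModModule.sub_eq_add, coeff_sum, Finsupp.single_apply]
  have hN : ∀ p q, N p q ^ 2 = 0 := fun p q => by
    show (∑ g, single g (a p q g)) ^ 2 = 0
    rw [sum_single_pow_char 2 (ZModModule.char_nsmul_eq_zero 2), ha, zero_pow two_ne_zero,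
      single_zero]
  have hN0 := Matrix.pow_char_mul_card_eq_zero 2 N hN
  rw [Fintype.card_fin] at hN0
  rw [hMN, ← map_pow, hN0, map_zero]
end

section
/- Let s be a natural number, let M : Matrix (Fin s × G) (Fin s × G) R be a block matrix all of whose blocks are Hadamard matrices, with witnesses a p q : G → R satisfying M (p,i) (q,j) = a p q (i + j), and let N : Matrix (Fin s × G) (Fin s × G) R be a block matrix all of whose blocks are Hadamard matrices with eigenvalue zero (witnesses b p q : G → R with N (p,i) (q,j) = b p q (i + j) and ∑_{g ∈ G} b p q g = 0 for all p, q). Define M'' : Matrix (Fin s) (Fin s) R by M'' p q = ∑_{g ∈ G} a p q g. Then (Polynomial.aeval (M + N) (Matrix.charpoly M''))^2 = 0. -/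
/-!
Write `M + N` as the image of a matrix `T` over the group algebra `R[G]` under the regular
representation `u ↦ (u (i - j))ᵢⱼ` (in `G`, `i - j = i + j`); as the blocks of `N` have
eigenvalue zero, `M''` is the entrywise augmentation `ε(T)`. By Cayley–Hamilton,
`χ_{M''}(T) = D(T)` for `D = χ_{M''} - χ_T`, whose coefficients lie in `ker ε`. Since `2 = 0` in
`R` and `2g = 0` in `G`, Frobenius gives `u² = ε(u)²` in `R[G]`, so the coefficients of `D` square
to zero, hence `D² = 0`, again by Frobenius.
-/

open Polynomial Matrix Coalgebra

namespace Polynomial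

theorem pow_eq_zero_of_forall_coeff_pow_eq_zero {A : Type*} [CommSemiring A] {p : ℕ} [ExpChar A p]
    {f : A[X]} (hf : ∀ n, f.coeff n ^ p = 0) : f ^ p = 0 := by
  have : f.map (frobenius A p) = 0 := by
    ext n
    simpa [frobenius_def] using hf n
  rw [← map_frobenius_expand, map_expand, this, map_zero]

end Polynomial

namespace Matrix

variable {R A n : Type*} [CommRing R] [CommRing A] [Algebra R A] [Fintype n] [DecidableEq n]

theorem aeval_charpoly_map_pow_eq_zero {p : ℕ} [ExpChar A p] (φ : A →ₐ[R] R)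
    (hφ : ∀ x, φ x = 0 → x ^ p = 0) (T : Matrix n n A) :
    aeval T (T.map φ).charpoly ^ p = 0 := by
  set D : A[X] := (T.map φ).charpoly.map (algebraMap R A) - T.charpoly
  have hD : aeval T (T.map φ).charpoly = aeval T D := by
    rw [map_sub, aeval_self_charpoly, sub_zero, aeval_map_algebraMap]
  have hDcoeff : ∀ i, φ (D.coeff i) = 0 := fun i => by
    have hmap := charpoly_map T φ.toRingHom
    rw [AlgHom.toRingHom_eq_coe, RingHom.coe_coe] at hmap
    rw [coeff_sub, map_sub, coeff_map, AlgHom.commutes, hmap, coeff_map]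
    exact sub_self _
  rw [hD, ← map_pow, pow_eq_zero_of_forall_coeff_pow_eq_zero fun i => hφ _ (hDcoeff i), map_zero]

end Matrix

namespace AddMonoidAlgebra

section Counit

variable {R G : Type*} [CommSemiring R]

theorem counit_eq_sum_coeff [Fintype G] (u : R[G]) : counit (R := R) u = ∑ g, u.coeff g := by
  induction u using AddMonoidAlgebra.induction with
  | zero => simp
  | single_add g r u _ _ ih =>
    simp [ih, Finset.sum_add_distrib]

instance charP [AddMonoid G] (p : ℕ) [CharP R p] : CharP R[G] p :=
  charP_of_injective_algebraMap
    (Function.LeftInverse.injective (Bialgebra.counitAlgHom R R[G]).commutes) p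

theorem sq_eq_algebraMap_counit_sq [AddCommMonoid G] [CharP R 2] (hG : ∀ g : G, g + g = 0)
    (u : R[G]) : u ^ 2 = algebraMap R R[G] (counit u ^ 2) := by
  induction u using AddMonoidAlgebra.induction with
  | zero => simp
  | single_add g r u _ _ ih =>
    rw [add_pow_char, ih, single_pow, map_add, counit_single, add_pow_char, map_add, two_nsmul, hG]
    rfl

theorem sq_eq_zero_of_counit_eq_zero [AddCommMonoid G] [CharP R 2] (hG : ∀ g : G, g + g = 0)
    {u : R[G]} (hu : counit (R := R) u = 0) : u ^ 2 = 0 := by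
  rw [sq_eq_algebraMap_counit_sq hG, hu, zero_pow two_ne_zero, map_zero]

end Counit

section Circulant

variable {R G : Type*} [CommSemiring R] [AddCommGroup G] [Fintype G] [DecidableEq G]

noncomputable def circulantAlgHom : R[G] →ₐ[R] Matrix G G R where
  toFun u := circulant u.coeff
  map_one' := by
    rw [one_def, coeff_single, Finsupp.single_eq_pi_single, circulant_single_one]
  map_mul' u v := by
    rw [circulant_mul]
    congr 1
    ext g
    simp [coeff_mul_apply_right, Finsupp.sum_fintype, mulVec, dotProduct, sub_eq_add_neg]
  map_zero' := circulant_zero R G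
  map_add' u v := circulant_add _ _
  commutes' r := by
    rw [coe_algebraMap]
    simp [Finsupp.single_eq_pi_single, algebraMap_eq_diagonal]

theorem circulantAlgHom_apply (u : R[G]) (i j : G) : circulantAlgHom u i j = u.coeff (i - j) := rfl

end Circulant

section BlockCirculant

variable {R G : Type*} [CommSemiring R] [AddCommGroup G] [Fintype G] [DecidableEq G]

noncomputable def blockCirculantAlgHom (n : Type*) [Fintype n] [DecidableEq n] :
    Matrix n n R[G] →ₐ[R] Matrix (n × G) (n × G) R :=
  (compAlgEquiv n G R R).toAlgHom.comp circulantAlgHom.mapMatrix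

theorem blockCirculantAlgHom_apply {n : Type*} [Fintype n] [DecidableEq n]
    (A : Matrix n n R[G]) (p q : n) (i j : G) :
    blockCirculantAlgHom n A (p, i) (q, j) = (A p q).coeff (i - j) := rfl

end BlockCirculant

end AddMonoidAlgebra

open AddMonoidAlgebra in
/-- If `M` is an `s × s` block matrix with Hadamard blocks (with block eigenvalue matrix `M''`),
and `N` is an `s × s` block matrix with Hadamard blocks all of eigenvalue zero, then evaluating
the characteristic polynomial of `M''` at `M + N` gives a square-zero matrix. -/
theorem charpoly_eval_add_ker_sq_eq_zero (k s : ℕ) (R : Type*) [CommRing R] [CharP R 2]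
    (M N : Matrix (Fin s × (Fin k → ZMod 2)) (Fin s × (Fin k → ZMod 2)) R)
    (a b : Fin s → Fin s → (Fin k → ZMod 2) → R)
    (hM : ∀ p q (i j : Fin k → ZMod 2), M (p, i) (q, j) = a p q (i + j))
    (hN : ∀ p q (i j : Fin k → ZMod 2), N (p, i) (q, j) = b p q (i + j))
    (hb : ∀ p q, ∑ g, b p q g = 0) :
    (Polynomial.aeval (M + N) (Matrix.charpoly (Matrix.of fun p q => ∑ g, a p q g))) ^ 2 = 0 := by
  have hG : ∀ g : Fin k → ZMod 2, g + g = 0 := fun g => funext fun _ => CharTwo.add_self_eq_zero _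
  let T : Matrix (Fin s) (Fin s) R[Fin k → ZMod 2] :=
    of fun p q => ofCoeff (Finsupp.equivFunOnFinite.symm (a p q + b p q))
  have hT : blockCirculantAlgHom (Fin s) T = M + N := by
    ext ⟨p, i⟩ ⟨q, j⟩
    simp [T, blockCirculantAlgHom_apply, hM, hN, sub_eq_add_neg, neg_eq_of_add_eq_zero_left (hG j)]
  have hεT : T.map (Bialgebra.counitAlgHom R _) = of fun p q => ∑ g, a p q g := by
    ext p q
    simp [T, counit_eq_sum_coeff, Finset.sum_add_distrib, hb]
  rw [← hT, ← hεT, aeval_algHom_apply, ← map_pow,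
    aeval_charpoly_map_pow_eq_zero _ fun _ => sq_eq_zero_of_counit_eq_zero hG, map_zero]
end

section
/- Let H : Matrix G G R be a Hadamard matrix with first row a : G → R (so H i j = a (i + j) for all i, j). Then H^2 = λ(H)^2 • (1 : Matrix G G R), where λ(H) = ∑_{g ∈ G} a g; that is, H * H equals the scalar matrix (∑_{g ∈ G} a g)^2 · I. -/
/-- A Hadamard matrix `H` over a commutative ring of characteristic 2 with first row `a`
satisfies `H ^ 2 = λ(H) ^ 2 • I`, where `λ(H) = ∑ g, a g`. -/
theorem hadamard_sq_eq_eigenvalue_sq_smul_one (k : ℕ) (R : Type*) [CommRing R] [CharP R 2]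
    (H : Matrix (Fin k → ZMod 2) (Fin k → ZMod 2) R) (a : (Fin k → ZMod 2) → R)
    (hH : ∀ i j, H i j = a (i + j)) :
    H ^ 2 = (∑ g, a g) ^ 2 • (1 : Matrix (Fin k → ZMod 2) (Fin k → ZMod 2) R) := by
  have hxx : ∀ x : Fin k → ZMod 2, x + x = 0 :=
    fun x => funext fun t => CharTwo.add_self_eq_zero _
  ext i j
  rw [pow_two, Matrix.mul_apply]
  simp only [hH, Matrix.smul_apply, Matrix.one_apply, smul_eq_mul]
  by_cases h : i = j
  · subst h
    rw [if_pos rfl, mul_one]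
    calc ∑ x, a (i + x) * a (x + i)
        = ∑ x, a (i + x) ^ 2 := by
          refine Finset.sum_congr rfl fun x _ => ?_
          rw [add_comm x i, sq]
      _ = ∑ g, a g ^ 2 :=
          Fintype.sum_equiv (Equiv.addLeft i) _ _ (fun x => rfl)
      _ = (∑ g, a g) ^ 2 := (sum_pow_char _ _ _).symm
  · rw [if_neg h, mul_zero]
    refine Finset.sum_involution (fun x _ => x + i + j) ?_ ?_ ?_ ?_
    · intro x _
      have h1 : i + (x + i + j) = x + j := by
        rw [add_comm x i, ← add_assoc, ← add_assoc, hxx, zero_add]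
      have h2 : x + i + j + j = x + i := by
        rw [add_assoc, hxx, add_zero]
      rw [h1, h2, add_comm i x, mul_comm (a (x + j))]
      exact CharTwo.add_self_eq_zero _
    · intro x _ _ hxe
      apply h
      have : i + j = 0 := by
        have := congrArg (fun y => y + x) hxe
        simpa [add_assoc, add_comm, add_left_comm, hxx] using this
      have := congrArg (fun y => y + j) this
      simpa [add_assoc, hxx] using this
    · intro x _; exact Finset.mem_univ _
    · intro x _
      show x + i + j + i + j = x
      have e : x + i + j + i + j = x + (i + i) + (j + j) := by abel
      rw [e, hxx, hxx, add_zero, add_zero]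
end

section
/- Let H : Matrix G G R be a Hadamard matrix with first row a : G → R. Then the characteristic polynomial of H is (X - C λ(H))^(2^k), where λ(H) = ∑_{g ∈ G} a g; in particular λ(H) is the unique eigenvalue of H. -/
open Polynomial Matrix

lemma zmod2_eq_one {z : ZMod 2} (h : z ≠ 0) : z = 1 := by revert h; revert z; decide

lemma add_eq_cons {k : ℕ} (i j : Fin (k + 1) → ZMod 2) :
    i + j = Fin.cons (i 0 + j 0) (Fin.tail i + Fin.tail j) := by
  funext x
  refine Fin.cases ?_ (fun x => ?_) x <;> simp [Fin.tail]

lemma det_fromBlocks_char2 {n : Type*} [Fintype n] [DecidableEq n]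
    {S : Type*} [CommRing S] [CharP S 2] (A B : Matrix n n S) :
    (Matrix.fromBlocks A B B A).det = (A + B).det ^ 2 := by
  have h2 : ∀ M : Matrix n n S, M + M = 0 := fun M => by
    ext i j; exact CharTwo.add_self_eq_zero _
  have e1 : A + B + B = A := by rw [add_assoc, h2, add_zero]
  have e2 : A + (A + B) = B := by rw [← add_assoc, h2, zero_add]
  have e3 : B + (A + B) = A := by rw [add_comm A B, ← add_assoc, h2, zero_add]
  have key : Matrix.fromBlocks A B B A =
      Matrix.fromBlocks 1 1 0 1 * Matrix.fromBlocks (A + B) 0 B (A + B) *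
        Matrix.fromBlocks (1 : Matrix n n S) 1 0 1 := by
    simp only [Matrix.fromBlocks_multiply, Matrix.one_mul, Matrix.mul_one,
      Matrix.zero_mul, Matrix.mul_zero, add_zero, zero_add]
    rw [e1, e2, e3]
  rw [key, Matrix.det_mul, Matrix.det_mul, Matrix.det_fromBlocks_zero₂₁,
    Matrix.det_fromBlocks_zero₁₂, Matrix.det_one]
  ring

def splitEquiv (k : ℕ) : (Fin (k + 1) → ZMod 2) ≃ ((Fin k → ZMod 2) ⊕ (Fin k → ZMod 2)) where
  toFun x := if x 0 = 0 then Sum.inl (Fin.tail x) else Sum.inr (Fin.tail x)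
  invFun := Sum.elim (fun u => Fin.cons 0 u) (fun u => Fin.cons 1 u)
  left_inv x := by
    by_cases h : x 0 = 0
    · simp only [h, if_true, Sum.elim_inl]
      rw [← h, Fin.cons_self_tail]
    · have h1 : x 0 = 1 := zmod2_eq_one h
      simp only [h, if_false, Sum.elim_inr]
      rw [← h1, Fin.cons_self_tail]
  right_inv u := by rcases u with u | u <;> simp [Fin.tail_cons]

lemma splitEquiv_inl {k : ℕ} {x : Fin (k + 1) → ZMod 2} (h : x 0 = 0) :
    splitEquiv k x = Sum.inl (Fin.tail x) := by simp [splitEquiv, h]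

lemma splitEquiv_inr {k : ℕ} {x : Fin (k + 1) → ZMod 2} (h : x 0 ≠ 0) :
    splitEquiv k x = Sum.inr (Fin.tail x) := by simp [splitEquiv, h]

lemma hadamard_det (k : ℕ) (S : Type*) [CommRing S] [CharP S 2]
    (b : (Fin k → ZMod 2) → S) :
    (Matrix.of fun i j : Fin k → ZMod 2 => b (i + j)).det = (∑ g, b g) ^ (2 ^ k) := by
  induction k generalizing S with
  | zero =>
      rw [Matrix.det_unique, pow_zero, pow_one, Fintype.sum_unique]
      exact congrArg b (Subsingleton.elim _ _)
  | succ k ih =>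
      set e := splitEquiv k with he
      have hre : (Matrix.of fun i j : Fin (k+1) → ZMod 2 => b (i + j)) =
          (Matrix.reindex e e).symm (Matrix.fromBlocks
            (Matrix.of fun i j : Fin k → ZMod 2 => b (Fin.cons 0 (i + j)))
            (Matrix.of fun i j => b (Fin.cons 1 (i + j)))
            (Matrix.of fun i j => b (Fin.cons 1 (i + j)))
            (Matrix.of fun i j => b (Fin.cons 0 (i + j)))) := by
        ext i j
        simp only [Matrix.reindex_symm, Matrix.reindex_apply, Matrix.submatrix_apply,
          Matrix.of_apply]
        rw [add_eq_cons i j]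
        simp only [Equiv.symm_symm, he]
        by_cases hi : i 0 = 0 <;> by_cases hj : j 0 = 0
        · rw [splitEquiv_inl hi, splitEquiv_inl hj, Matrix.fromBlocks_apply₁₁,
            Matrix.of_apply, hi, hj, add_zero]
        · rw [splitEquiv_inl hi, splitEquiv_inr hj, Matrix.fromBlocks_apply₁₂,
            Matrix.of_apply, hi, zmod2_eq_one hj, zero_add]
        · rw [splitEquiv_inr hi, splitEquiv_inl hj, Matrix.fromBlocks_apply₂₁,
            Matrix.of_apply, zmod2_eq_one hi, hj, add_zero]
        · rw [splitEquiv_inr hi, splitEquiv_inr hj, Matrix.fromBlocks_apply₂₂,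
            Matrix.of_apply, zmod2_eq_one hi, zmod2_eq_one hj,
            (by decide : (1 : ZMod 2) + 1 = 0)]
      rw [hre, Matrix.reindex_symm, Matrix.det_reindex_self, det_fromBlocks_char2]
      set c : (Fin k → ZMod 2) → S := fun s => b (Fin.cons 0 s) + b (Fin.cons 1 s) with hc
      have hAB : (Matrix.of fun i j : Fin k → ZMod 2 => b (Fin.cons 0 (i + j))) +
          (Matrix.of fun i j => b (Fin.cons 1 (i + j))) =
          Matrix.of fun i j : Fin k → ZMod 2 => c (i + j) := by
        ext i j; simp [Matrix.add_apply, hc]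
      rw [hAB, ih]
      have hsum : ∑ g : Fin (k+1) → ZMod 2, b g =
          ∑ s : Fin k → ZMod 2, c s := by
        rw [← Equiv.sum_comp e.symm b, Fintype.sum_sum_type]
        simp [he, splitEquiv, hc, Finset.sum_add_distrib]
      rw [← hsum, ← pow_mul, pow_succ]

open Polynomial in
/-- The characteristic polynomial of a Hadamard matrix `H` over a commutative ring of
characteristic 2 with first row `a` is `(X - C λ(H)) ^ (2 ^ k)` where `λ(H) = ∑ g, a g`;
in particular `λ(H)` is the unique eigenvalue of `H`. -/
theorem hadamard_charpoly (k : ℕ) (R : Type*) [CommRing R] [CharP R 2]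
    (H : Matrix (Fin k → ZMod 2) (Fin k → ZMod 2) R) (a : (Fin k → ZMod 2) → R)
    (hH : ∀ i j, H i j = a (i + j)) :
    Matrix.charpoly H = (X - C (∑ g, a g)) ^ (2 ^ k) := by
  have hadd : ∀ i j : Fin k → ZMod 2, i + j = 0 ↔ i = j := by
    intro i j
    constructor
    · intro h
      funext x
      have h2 : i x + j x = 0 := by simpa using congrFun h x
      revert h2
      generalize i x = u; generalize j x = v
      revert v; revert u; decide
    · rintro rfl
      funext x
      simp only [Pi.add_apply, Pi.zero_apply]
      exact CharTwo.add_self_eq_zero _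
  set b : (Fin k → ZMod 2) → R[X] := fun g => (if g = 0 then X else 0) - C (a g) with hb
  have hcm : Matrix.charmatrix H = Matrix.of fun i j : Fin k → ZMod 2 => b (i + j) := by
    ext i j
    by_cases h : i = j
    · subst h
      rw [Matrix.charmatrix_apply_eq, Matrix.of_apply, hb]
      simp [hH, (hadd i i).mpr rfl]
    · rw [Matrix.charmatrix_apply_ne _ _ _ h, Matrix.of_apply, hb]
      have : ¬ (i + j = 0) := fun hc => h ((hadd i j).mp hc)
      simp [hH, this]
  rw [Matrix.charpoly, hcm, hadamard_det]
  congr 1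
  rw [hb]
  push_cast
  rw [Finset.sum_sub_distrib]
  congr 1
  · simp
  · rw [map_sum]
end

section
/- Let H₁, H₂ : Matrix G G R be Hadamard matrices. Then det(H₁ + H₂) = det H₁ + det H₂. -/
/-!
Over an elementary abelian 2-group `G` we have `i + j = i - j`, so a Hadamard matrix is the
circulant matrix of its first row `a`. In characteristic 2 such a matrix squares to
`(∑ a)^2 • 1`: off the diagonal the terms of `∑ j, a (c - j) * a j` cancel in pairs under
`j ↦ c - j`. Hence `det H ^ 2 = ((∑ a) ^ |G|) ^ 2`, and in a reduced ring the injectivity of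
Frobenius gives `det H = (∑ a) ^ |G|`, which is additive in `a` because `|G|` is a power of 2.
A general ring of characteristic 2 is reached by specialising the polynomial ring over `𝔽₂` in
the entries of both first rows, which is reduced.
-/

open Matrix Finset

theorem det_circulant_map {G R S : Type*} [Sub G] [Fintype G] [DecidableEq G]
    [CommRing R] [CommRing S] (f : S →+* R) (v : G → S) :
    (circulant (f ∘ v)).det = f (circulant v).det := by
  rw [RingHom.map_det, RingHom.mapMatrix_apply, map_circulant]
  rfl

section CharTwo

variable {G R : Type*} [AddCommGroup G] [Fintype G] [CommRing R] [CharP R 2]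

theorem sum_apply_sub_mul_apply_eq_zero (a : G → R) {c : G} (hc : ∀ j, c - j ≠ j) :
    ∑ j, a (c - j) * a j = 0 :=
  sum_ninvolution (c - ·) (fun j => by rw [sub_sub_cancel, mul_comm, CharTwo.add_self_eq_zero])
    (fun j _ => hc j) (fun _ => mem_univ _) (fun _ => sub_sub_cancel _ _)

variable [Module (ZMod 2) G] [DecidableEq G]

theorem circulant_mulVec_self (a : G → R) :
    circulant a *ᵥ a = Pi.single 0 ((∑ g, a g) ^ 2) := by
  ext c
  simp only [mulVec, dotProduct, circulant_apply]
  rcases eq_or_ne c 0 with rfl | hc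
  · rw [Pi.single_eq_same, sum_pow_char]
    simp only [ZModModule.sub_eq_add, zero_add, sq]
  · rw [Pi.single_eq_of_ne hc, sum_apply_sub_mul_apply_eq_zero]
    intro j hj
    rw [ZModModule.sub_eq_add, add_eq_right] at hj
    exact hc hj

theorem circulant_mul_self (a : G → R) :
    circulant a * circulant a = scalar G ((∑ g, a g) ^ 2) := by
  rw [circulant_mul, circulant_mulVec_self, circulant_single]

theorem det_circulant_sq (a : G → R) :
    (circulant a).det ^ 2 = ((∑ g, a g) ^ Fintype.card G) ^ 2 := by
  rw [sq, ← det_mul, circulant_mul_self, scalar_apply, det_diagonal, prod_const, card_univ,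
    ← pow_mul, mul_comm, pow_mul]

theorem det_circulant_of_isReduced [IsReduced R] (a : G → R) :
    (circulant a).det = (∑ g, a g) ^ Fintype.card G :=
  frobenius_inj R 2 (det_circulant_sq a)

theorem det_circulant_add_of_isReduced [IsReduced R] (a b : G → R) :
    (circulant (a + b)).det = (circulant a).det + (circulant b).det := by
  have hcard : Fintype.card G = 2 ^ Module.finrank (ZMod 2) G := by
    rw [Module.card_eq_pow_finrank (K := ZMod 2), ZMod.card]
  simp only [det_circulant_of_isReduced, Pi.add_apply, sum_add_distrib, hcard, add_pow_char_pow]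

theorem det_circulant_add (a b : G → R) :
    (circulant (a + b)).det = (circulant a).det + (circulant b).det := by
  let x : G → MvPolynomial (G ⊕ G) (ZMod 2) := fun g => .X (.inl g)
  let y : G → MvPolynomial (G ⊕ G) (ZMod 2) := fun g => .X (.inr g)
  let φ := MvPolynomial.eval₂Hom (ZMod.castHom dvd_rfl R) (Sum.elim a b)
  have ha : φ ∘ x = a := funext fun g => MvPolynomial.eval₂Hom_X' _ _ (Sum.inl g)
  have hb : φ ∘ y = b := funext fun g => MvPolynomial.eval₂Hom_X' _ _ (Sum.inr g)
  have hab : φ ∘ (x + y) = φ ∘ x + φ ∘ y := funext fun g => map_add φ (x g) (y g)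
  rw [← ha, ← hb, ← hab, det_circulant_map, det_circulant_map, det_circulant_map,
    det_circulant_add_of_isReduced, map_add]

end CharTwo

/-- For Hadamard matrices `H₁, H₂` over a commutative ring of characteristic 2,
`det (H₁ + H₂) = det H₁ + det H₂`. -/
theorem hadamard_det_add (k : ℕ) (R : Type*) [CommRing R] [CharP R 2]
    (H₁ H₂ : Matrix (Fin k → ZMod 2) (Fin k → ZMod 2) R)
    (h₁ : ∃ a : (Fin k → ZMod 2) → R, ∀ i j, H₁ i j = a (i + j))
    (h₂ : ∃ b : (Fin k → ZMod 2) → R, ∀ i j, H₂ i j = b (i + j)) :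
    (H₁ + H₂).det = H₁.det + H₂.det := by
  obtain ⟨a, ha⟩ := h₁
  obtain ⟨b, hb⟩ := h₂
  have hH₁ : H₁ = circulant a := by ext i j; rw [ha, circulant_apply, ZModModule.sub_eq_add]
  have hH₂ : H₂ = circulant b := by ext i j; rw [hb, circulant_apply, ZModModule.sub_eq_add]
  rw [hH₁, hH₂, ← circulant_add, det_circulant_add]
end

section
/- The augmentation ideal I = ker ε of the group algebra AddMonoidAlgebra R G satisfies I^(k+1) = 0 (the zero ideal). -/
/-!
The augmentation ideal is spanned by the elements `g - 1`, and the identity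
`xy - 1 = (x - 1)(y - 1) + (x - 1) + (y - 1)` shows that the `k` elements `eᵢ - 1`, for the
standard generators `eᵢ` of `G`, already span it. In characteristic 2 each of them squares to
`eᵢ² - 1 = 0`, and in a commutative ring an ideal spanned by `k` square-zero elements has vanishing
`(k + 1)`-st power: every product of `k + 1` generators repeats one of them.
-/

open Finset

-- Sharper by one in the exponent than `Ideal.sup_pow_add_le_pow_sup_pow`.
theorem Ideal.sup_pow_add_add_one_le {A : Type*} [CommSemiring A] (I J : Ideal A) (m n : ℕ) :
    (I ⊔ J) ^ (m + n + 1) ≤ I ^ (m + 1) ⊔ J ^ (n + 1) := by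
  rw [← add_eq_sup, add_pow, sum_eq_sup]
  refine Finset.sup_le fun i hi ↦ ?_
  by_cases hm : m + 1 ≤ i
  · exact mul_le_left.trans (mul_le_left.trans ((pow_le_pow_right hm).trans le_sup_left))
  · refine mul_le_left.trans (mul_le_right.trans ((pow_le_pow_right ?_).trans le_sup_right))
    grind

theorem Ideal.span_image_pow_card_succ_eq_bot {ι A : Type*} [CommSemiring A] (v : ι → A)
    (s : Finset ι) (hv : ∀ i ∈ s, v i ^ 2 = 0) : span (v '' s) ^ (#s + 1) = ⊥ := by
  classical
  induction s using Finset.induction with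
  | empty => simp
  | insert i s hi ih =>
    rw [coe_insert, Set.image_insert_eq, Set.insert_eq, span_union, card_insert_of_notMem hi,
      ← le_bot_iff, add_comm #s 1]
    refine (sup_pow_add_add_one_le _ _ 1 #s).trans ?_
    rw [span_singleton_pow, hv i (mem_insert_self i s),
      ih fun j hj ↦ hv j (mem_insert_of_mem hj), span_singleton_eq_bot.mpr rfl, sup_bot_eq]

theorem sub_one_sq_eq_zero_of_sq_eq_one {A : Type*} [CommRing A] [CharP A 2] {x : A}
    (hx : x ^ 2 = 1) : (x - 1) ^ 2 = 0 := by
  rw [CharTwo.sub_eq_add, CharTwo.add_sq, hx, one_pow, CharTwo.add_self_eq_zero]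

theorem ZMod.addSubmonoid_closure_range_single_one_eq_top {ι : Type*} [Fintype ι]
    [DecidableEq ι] {n : ℕ} [NeZero n] :
    AddSubmonoid.closure (Set.range fun i : ι ↦ Pi.single i (1 : ZMod n)) = ⊤ := by
  refine eq_top_iff.mpr fun g _ ↦ ?_
  rw [← univ_sum_single g]
  refine AddSubmonoid.sum_mem _ fun i _ ↦ ?_
  rw [← ZMod.natCast_zmod_val (g i), ← nsmul_one, Pi.single_nsmul]
  exact AddSubmonoid.nsmul_mem _ (AddSubmonoid.subset_closure (Set.mem_range_self i)) _

namespace AddMonoidAlgebra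

variable {R G : Type*} [CommRing R] [AddCommMonoid G]

theorem single_sq_eq_one {g : G} (hg : g + g = 0) : single g (1 : R) ^ 2 = 1 := by
  rw [sq, single_mul_single, hg, mul_one, one_def]

theorem single_sub_one_mem_span_of_closure_eq_top {s : Set G}
    (hs : AddSubmonoid.closure s = ⊤) (g : G) :
    single g (1 : R) - 1 ∈ Ideal.span ((fun g ↦ single g (1 : R) - 1) '' s) := by
  have hg : g ∈ AddSubmonoid.closure s := hs ▸ AddSubmonoid.mem_top g
  induction hg using AddSubmonoid.closure_induction with
  | mem g hg => exact Ideal.subset_span ⟨g, hg, rfl⟩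
  | zero => simp [← one_def]
  | add g h _ _ hg hh =>
    have hmul : single (g + h) (1 : R) = single g 1 * single h 1 := by
      rw [single_mul_single, mul_one]
    rw [hmul, show ∀ x y : R[G], x * y - 1 = (x - 1) * (y - 1) + (x - 1) + (y - 1) by
      intros; ring]
    exact add_mem (add_mem (Ideal.mul_mem_right _ _ hg) hg) hh

theorem ker_le_span_single_sub_one (ε : R[G] →ₐ[R] R) (hε : ∀ g r, ε (single g r) = r) :
    RingHom.ker ε ≤ Ideal.span (Set.range fun g ↦ single g (1 : R) - 1) := by
  have key (f : R[G]) :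
      f - algebraMap R _ (ε f) ∈ Ideal.span (Set.range fun g ↦ single g (1 : R) - 1) := by
    induction f using induction_linear with
    | zero => simp
    | add f f' hf hf' =>
      convert add_mem hf hf' using 1
      rw [map_add, map_add]
      abel
    | single g r =>
      have : single g r - algebraMap R _ r = (single g 1 - 1) * single 0 r := by
        rw [sub_mul, single_mul_single, one_mul, add_zero, one_mul, coe_algebraMap]
        rfl
      rw [hε, this]
      exact Ideal.mul_mem_right _ _ (Ideal.subset_span ⟨g, rfl⟩)
  intro f hf
  simpa [RingHom.mem_ker.mp hf] using key f

end AddMonoidAlgebra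

/-- Over a commutative ring of characteristic 2, the augmentation ideal `I = ker ε` of the
group algebra of `G = Fin k → ZMod 2` satisfies `I ^ (k + 1) = 0`. -/
theorem augmentationIdeal_pow_succ_eq_bot (k : ℕ) (R : Type*) [CommRing R] [CharP R 2]
    (ε : AddMonoidAlgebra R (Fin k → ZMod 2) →ₐ[R] R)
    (hε : ∀ (g : Fin k → ZMod 2) (r : R), ε (AddMonoidAlgebra.single g r) = r) :
    (RingHom.ker ε) ^ (k + 1) = ⊥ := by
  have := charP_of_injective_algebraMap' R (A := AddMonoidAlgebra R (Fin k → ZMod 2)) 2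
  set v : Fin k → AddMonoidAlgebra R (Fin k → ZMod 2) := fun i ↦
    AddMonoidAlgebra.single (Pi.single i 1) 1 - 1
  have hker : RingHom.ker ε ≤ Ideal.span (Set.range v) := by
    refine (AddMonoidAlgebra.ker_le_span_single_sub_one ε hε).trans (Ideal.span_le.mpr ?_)
    rintro _ ⟨g, rfl⟩
    have := AddMonoidAlgebra.single_sub_one_mem_span_of_closure_eq_top (R := R)
      ZMod.addSubmonoid_closure_range_single_one_eq_top g
    rwa [← Set.range_comp] at this
  have hv : ∀ i ∈ univ, v i ^ 2 = 0 := fun i _ ↦ sub_one_sq_eq_zero_of_sq_eq_one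
    (AddMonoidAlgebra.single_sq_eq_one (funext fun _ ↦ CharTwo.add_self_eq_zero _))
  have hnil := Ideal.span_image_pow_card_succ_eq_bot v univ hv
  rw [coe_univ, Set.image_univ, card_univ, Fintype.card_fin] at hnil
  exact le_bot_iff.mp (hnil ▸ Ideal.pow_right_mono hker _)
end

section
/- Any product of k + 1 generators of the augmentation ideal vanishes: for every function g : Fin (k+1) → G, the product ∏_{i : Fin (k+1)} (single (g i) 1 - 1) equals 0 in AddMonoidAlgebra R G. -/
open Finset

lemma sum_symmDiff_aux {k n : ℕ} (g : Fin n → (Fin k → ZMod 2)) (s t : Finset (Fin n)) :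
    ∑ i ∈ symmDiff s t, g i = ∑ i ∈ s, g i + ∑ i ∈ t, g i := by
  classical
  have hdisj : Disjoint (s \ t) (t \ s) := disjoint_sdiff_sdiff
  rw [symmDiff_def, Finset.sup_eq_union, Finset.sum_union hdisj]
  have h1 : ∑ i ∈ s \ (s ∩ t), g i + ∑ i ∈ s ∩ t, g i = ∑ i ∈ s, g i :=
    Finset.sum_sdiff inter_subset_left
  have h2 : ∑ i ∈ t \ (t ∩ s), g i + ∑ i ∈ t ∩ s, g i = ∑ i ∈ t, g i :=
    Finset.sum_sdiff inter_subset_left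
  rw [Finset.sdiff_inter_self_left] at h1 h2
  have hself : (∑ i ∈ s ∩ t, g i) + (∑ i ∈ s ∩ t, g i) = 0 := by
    funext j; exact CharTwo.add_self_eq_zero _
  rw [inter_comm t s] at h2
  linear_combination h1 + h2 - hself

/-- Over a commutative ring of characteristic 2, any product of `k + 1` generators
`single g 1 - 1` of the augmentation ideal of the group algebra of `G = Fin k → ZMod 2`
vanishes. -/
theorem prod_augmentation_generators_eq_zero (k : ℕ) (R : Type*) [CommRing R] [CharP R 2]
    (g : Fin (k + 1) → (Fin k → ZMod 2)) :
    ∏ i : Fin (k + 1), (AddMonoidAlgebra.single (g i) (1 : R) - 1) = 0 := by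
  classical
  obtain ⟨t₁, t₂, hne, heq⟩ :=
    Fintype.exists_ne_map_eq_of_card_lt (fun t : Finset (Fin (k+1)) => ∑ i ∈ t, g i)
      (by simp [Fintype.card_finset]; exact Nat.pow_lt_pow_right one_lt_two (Nat.lt_succ_self k))
  set T := symmDiff t₁ t₂ with hT
  have hTne : T ≠ ∅ := fun h => hne (symmDiff_eq_bot.mp h)
  have hTsum : ∑ i ∈ T, g i = 0 := by
    funext j
    rw [hT, sum_symmDiff_aux, heq]
    exact congrFun (by funext j; exact CharTwo.add_self_eq_zero _ : (∑ i ∈ t₂, g i) + (∑ i ∈ t₂, g i) = 0) j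
  have hone : (1 : AddMonoidAlgebra R (Fin k → ZMod 2)) + 1 = 0 := by
    rw [AddMonoidAlgebra.one_def, ← AddMonoidAlgebra.single_add, CharTwo.add_self_eq_zero,
      AddMonoidAlgebra.single_zero]
  have hsub : ∀ i, AddMonoidAlgebra.single (g i) (1 : R) - 1
      = AddMonoidAlgebra.single (g i) (1 : R) + 1 := fun i => by
    rw [sub_eq_add_neg, neg_eq_of_add_eq_zero_left hone]
  simp only [hsub]
  rw [Finset.prod_add]
  simp only [Finset.prod_const_one, mul_one]
  have hps : ∀ t : Finset (Fin (k+1)), (∏ i ∈ t, AddMonoidAlgebra.single (g i) (1 : R))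
      = AddMonoidAlgebra.single (∑ i ∈ t, g i) 1 := fun t => by
    rw [AddMonoidAlgebra.prod_single, Finset.prod_const_one]
  simp only [hps]
  apply Finset.sum_ninvolution (g := fun t => symmDiff t T)
  · intro t
    have h : ∑ i ∈ symmDiff t T, g i = ∑ i ∈ t, g i := by
      rw [sum_symmDiff_aux, hTsum, add_zero]
    rw [h, ← AddMonoidAlgebra.single_add, CharTwo.add_self_eq_zero,
      AddMonoidAlgebra.single_zero]
  · intro t _
    rw [ne_eq, symmDiff_eq_left]
    simpa using hTne
  · intro t
    simp
  · intro t
    exact symmDiff_symmDiff_cancel_right T t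
end

section
/- Taking determinants commutes with the block-determinant in the following sense: let φ : AddMonoidAlgebra R G → Matrix G G R be the map φ f = (fun i j => f (i + j)) sending a group algebra element to the corresponding Hadamard matrix. Then for every s and every matrix M : Matrix (Fin s) (Fin s) (AddMonoidAlgebra R G), one has det (M.map (fun f => (φ f).det)) = (φ (M.det)).det, where M.det is the determinant of M over the commutative ring AddMonoidAlgebra R G. -/
/-!
For `G = (ZMod 2)^k` and `R` of characteristic 2, the Hadamard matrix `(i, j) ↦ f (i + j)` has
determinant `(∑ g, f g) ^ 2 ^ k`: splitting off one coordinate puts it in the block form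
`[[A, B], [B, A]]`, whose determinant is `det (A + B) * det (A - B) = det (A + B) ^ 2`, and
`A + B` is again a Hadamard matrix over `(ZMod 2)^(k-1)`. Hence `f ↦ det (φ f)` is the
augmentation followed by the `k`-th iterated Frobenius, a ring homomorphism, and ring
homomorphisms commute with determinants.
-/

open Matrix

theorem Matrix.det_fromBlocks_eq_det_add_mul_det_sub {n R : Type*} [Fintype n] [DecidableEq n]
    [CommRing R] (A B : Matrix n n R) :
    (fromBlocks A B B A).det = (A + B).det * (A - B).det := by
  have h : fromBlocks 1 1 0 1 * fromBlocks A B B A * fromBlocks 1 (-1) 0 1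
      = fromBlocks (A + B) 0 B (A - B) := by
    simp only [fromBlocks_multiply]
    congr 1 <;> noncomm_ring
  simpa [det_fromBlocks_zero₂₁, det_fromBlocks_zero₁₂] using congrArg det h

theorem Matrix.det_of_add_comp_addEquiv {G H R : Type*} [Add G] [Add H]
    [Fintype G] [Fintype H] [DecidableEq G] [DecidableEq H] [CommRing R]
    (e : G ≃+ H) (f : H → R) :
    (of fun i j => f (i + j)).det = (of fun i j => f (e (i + j))).det := by
  rw [← det_submatrix_equiv_self e.toEquiv]
  congr 1
  ext i j
  simp

theorem Matrix.det_of_add_prod_zmod_two {H R : Type*} [AddCommGroup H] [Fintype H]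
    [DecidableEq H] [CommRing R] [CharP R 2] (f : ZMod 2 × H → R) :
    (of fun i j => f (i + j)).det = (of fun i j => f (0, i + j) + f (1, i + j)).det ^ 2 := by
  let e : ZMod 2 × H ≃ H ⊕ H :=
    (finTwoEquiv.prodCongr (Equiv.refl H)).trans (Equiv.boolProdEquivSum H)
  have hblocks : reindex e e (of fun i j => f (i + j)) =
      fromBlocks (of fun i j => f (0, i + j)) (of fun i j => f (1, i + j))
        (of fun i j => f (1, i + j)) (of fun i j => f (0, i + j)) := by
    ext (i | i) (j | j)
    case inr.inr => exact congrArg (fun a => f (a, i + j)) (CharTwo.add_self_eq_zero 1)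
    all_goals rfl
  rw [← det_reindex_self e, hblocks, det_fromBlocks_eq_det_add_mul_det_sub, CharTwo.sub_eq_add,
    ← sq]
  rfl

theorem Matrix.det_of_add_eq_sum_pow (R : Type*) [CommRing R] [CharP R 2] :
    ∀ (k : ℕ) (f : (Fin k → ZMod 2) → R),
      (of fun i j => f (i + j)).det = (∑ g, f g) ^ 2 ^ k
  | 0, f => by
    rw [det_unique, Fintype.sum_unique, pow_zero, pow_one]
    exact congrArg f (Subsingleton.elim _ _)
  | k + 1, f => by
    let e := (Fin.consLinearEquiv ℕ fun _ : Fin (k + 1) => ZMod 2).toAddEquiv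
    have hsum : ∑ g, f g = ∑ h, (f (e (0, h)) + f (e (1, h))) := by
      rw [← e.toEquiv.sum_comp, Fintype.sum_prod_type_right]
      exact Finset.sum_congr rfl fun h _ => Fin.sum_univ_two fun a : Fin 2 => f (e (a, h))
    rw [det_of_add_comp_addEquiv e, det_of_add_prod_zmod_two fun x => f (e x),
      det_of_add_eq_sum_pow R k (fun h => f (e (0, h)) + f (e (1, h))), hsum, ← pow_mul, pow_succ]

noncomputable def AddMonoidAlgebra.augmentation_s17 (R G : Type*) [CommSemiring R] [AddMonoid G] :
    AddMonoidAlgebra R G →+* R :=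
  (AddMonoidAlgebra.lift R R G 1).toRingHom

theorem AddMonoidAlgebra.augmentation_apply {R G : Type*} [CommSemiring R] [AddMonoid G]
    [Fintype G] (f : AddMonoidAlgebra R G) : augmentation_s17 R G f = ∑ g, f.coeff g := by
  simp [augmentation_s17, AddMonoidAlgebra.lift_apply, Finsupp.sum_fintype]

noncomputable def detHadamardHom (k : ℕ) (R : Type*) [CommRing R] [CharP R 2] :
    AddMonoidAlgebra R (Fin k → ZMod 2) →+* R :=
  (iterateFrobenius R 2 k).comp (AddMonoidAlgebra.augmentation_s17 R _)

theorem detHadamardHom_apply (k : ℕ) (R : Type*) [CommRing R] [CharP R 2]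
    (f : AddMonoidAlgebra R (Fin k → ZMod 2)) :
    detHadamardHom k R f = (of fun i j => f.coeff (i + j)).det := by
  rw [det_of_add_eq_sum_pow, detHadamardHom, RingHom.comp_apply,
    AddMonoidAlgebra.augmentation_apply, iterateFrobenius_def]

/-- Taking determinants commutes with the block determinant: for `φ` the map sending a group
algebra element `f` over `G = Fin k → ZMod 2` to the Hadamard matrix `(i, j) ↦ f (i + j)`, and
any `s × s` matrix `M` over the commutative ring `AddMonoidAlgebra R G`, the determinant of the
`s × s` matrix of block determinants equals the determinant of the Hadamard matrix associated
to the determinant of `M`. -/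
theorem det_map_det_eq_det_hadamard_det (k : ℕ) (R : Type*) [CommRing R] [CharP R 2]
    (s : ℕ) (M : Matrix (Fin s) (Fin s) (AddMonoidAlgebra R (Fin k → ZMod 2))) :
    (M.map (fun f => (Matrix.of fun i j => f.coeff (i + j) :
        Matrix (Fin k → ZMod 2) (Fin k → ZMod 2) R).det)).det
      = (Matrix.of fun i j => M.det.coeff (i + j) :
          Matrix (Fin k → ZMod 2) (Fin k → ZMod 2) R).det := by
  simp_rw [← detHadamardHom_apply]
  rw [← RingHom.mapMatrix_apply, ← RingHom.map_det]
end

section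
/- If R is a reduced commutative ring of characteristic 2, then the nilradical of the group algebra AddMonoidAlgebra R G equals the augmentation ideal: nilradical (AddMonoidAlgebra R G) = ker ε. -/
/-!
The augmentation ideal is spanned over `R` by the elements `single g 1 - 1`, and each of them
squares to `single (g + g) 1 - 2 • single g 1 + 1 = 0` when `g + g = 0` and `2 = 0` in `R`;
so it lies in the nilradical. Conversely `ε` maps nilpotents to nilpotents of the reduced
ring `R`, i.e. to `0`.
-/

theorem nilradical_le_ker_of_isReduced {A B F : Type*} [CommSemiring A] [Semiring B]
    [IsReduced B] [FunLike F A B] [RingHomClass F A B] (f : F) :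
    nilradical A ≤ RingHom.ker f :=
  fun _ hx => ((mem_nilradical.1 hx).map f).eq_zero

namespace AddMonoidAlgebra

variable {R G : Type*} [CommRing R]

theorem sq_single_one_sub_one [AddCommMonoid G] [CharP R 2] {g : G} (hg : g + g = 0) :
    (single g (1 : R) - 1) ^ 2 = 0 := by
  have two_eq_zero : (2 : R[G]) = 0 := by
    rw [← map_ofNat (algebraMap R R[G]) 2, CharTwo.two_eq_zero, map_zero]
  have single_mul_self : single g (1 : R) * single g 1 = 1 := by
    rw [single_mul_single, hg, mul_one, one_def]
  linear_combination single_mul_self + (1 - single g 1) * two_eq_zero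

theorem sub_algebraMap_augmentation_mem [AddMonoid G] (ε : R[G] →ₐ[R] R)
    (hε : ∀ (g : G) (r : R), ε (single g r) = r) {I : Ideal R[G]}
    (hI : ∀ g : G, single g 1 - 1 ∈ I) (f : R[G]) : f - algebraMap R R[G] (ε f) ∈ I := by
  induction f using induction_linear with
  | zero => simp
  | add f f' hf hf' =>
    rw [map_add, map_add, add_sub_add_comm]
    exact I.add_mem hf hf'
  | single g r =>
    have : single g r - algebraMap R R[G] r = r • (single g 1 - 1) := by
      rw [smul_sub, smul_single', mul_one, Algebra.algebraMap_eq_smul_one]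
    rw [hε, this]
    exact Submodule.smul_of_tower_mem I r (hI g)

theorem ker_augmentation_le [AddMonoid G] (ε : R[G] →ₐ[R] R)
    (hε : ∀ (g : G) (r : R), ε (single g r) = r) {I : Ideal R[G]}
    (hI : ∀ g : G, single g 1 - 1 ∈ I) : RingHom.ker ε ≤ I := fun f hf => by
  simpa [(RingHom.mem_ker).1 hf] using sub_algebraMap_augmentation_mem ε hε hI f

theorem nilradical_eq_ker_augmentation [AddCommGroup G] [Module (ZMod 2) G] [IsReduced R]
    [CharP R 2] (ε : R[G] →ₐ[R] R) (hε : ∀ (g : G) (r : R), ε (single g r) = r) :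
    nilradical R[G] = RingHom.ker ε :=
  le_antisymm (nilradical_le_ker_of_isReduced ε) <| ker_augmentation_le ε hε fun g =>
    mem_nilradical.2 ⟨2, sq_single_one_sub_one (ZModModule.add_self g)⟩

end AddMonoidAlgebra

/-- If `R` is a reduced commutative ring of characteristic 2, the nilradical of the group
algebra of `G = Fin k → ZMod 2` over `R` equals the augmentation ideal `ker ε`. -/
theorem nilradical_groupAlgebra_eq_augmentationIdeal (k : ℕ) (R : Type*) [CommRing R]
    [IsReduced R] [CharP R 2]
    (ε : AddMonoidAlgebra R (Fin k → ZMod 2) →ₐ[R] R)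
    (hε : ∀ (g : Fin k → ZMod 2) (r : R), ε (AddMonoidAlgebra.single g r) = r) :
    nilradical (AddMonoidAlgebra R (Fin k → ZMod 2)) = RingHom.ker ε :=
  AddMonoidAlgebra.nilradical_eq_ker_augmentation ε hε
end
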